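/- arXiv:0809.3510 — 9 statements merged into one kernel-verified Lean document; each statement's English description precedes it below -/
import Mathlib

section
/- Let S = S[l,m,n] be a rotational symbol sequence. If the i-th cyclic permutation of S satisfies (σ_i S)_0 = L and (σ_i S)_{-d} = R, then i = 0 (mod n). -/
/-- A symbol sequence of length `n` is a function `ZMod n → Bool`
(`true` = `L`, `false` = `R`). -/
def SymbolSeq (n : ℕ) := ZMod n → Bool

/-- The `i`-th left cyclic permutation: `(σ_i S)_j = S_{i+j}`. -/
def cycPerm {n : ℕ} (i : ZMod n) (S : SymbolSeq n) : SymbolSeq n :=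
  fun j => S (i + j)

/-- The `i`-th multiplication permutation: `(π_i S)_j = S_{i·j}`. -/
def multPerm {n : ℕ} (i : ZMod n) (S : SymbolSeq n) : SymbolSeq n :=
  fun j => S (i * j)

/-- The rotational symbol sequence `S[l,m,n]`, defined by `S_{i·d} = L` for
`i mod n ∈ {0,…,l-1}` and `R` otherwise, where `d` is the multiplicative
inverse of `m` mod `n`.  Since `j = i·d ↔ i = j·m (mod n)`, this is
equivalently: `S_j = L` iff `(j·m mod n) < l`. -/
def rss (n l m : ℕ) : SymbolSeq n :=
  fun j => decide ((j * (m : ZMod n)).val < l)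

/-- If `(σ_i S[l,m,n])_0 = L` and `(σ_i S[l,m,n])_{-d} = R`, then `i = 0`. -/
theorem rss_shift_eq_zero (n l m d : ℕ) (hl : 0 < l) (hln : l < n)
    (hm : Nat.Coprime m n) (hd : d * m % n = 1) (i : ZMod n)
    (h0 : cycPerm i (rss n l m) 0 = true)
    (hmd : cycPerm i (rss n l m) (-(d : ZMod n)) = false) :
    i = 0 := by
  have hn : 0 < n := hl.trans hln
  haveI : NeZero n := ⟨hn.ne'⟩
  simp only [cycPerm, rss, add_zero] at h0 hmd
  have hdm : (d : ZMod n) * (m : ZMod n) = 1 := by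
    have : ((d * m % n : ℕ) : ZMod n) = ((d * m : ℕ) : ZMod n) := ZMod.natCast_mod _ _
    rw [hd] at this
    push_cast at this
    exact this.symm
  rw [decide_eq_true_eq] at h0
  rw [decide_eq_false_iff_not, not_lt] at hmd
  have key : (i + -(d : ZMod n)) * (m : ZMod n) = i * m - 1 := by
    rw [add_mul, neg_mul, hdm]; ring
  rw [key] at hmd
  set x := i * (m : ZMod n) with hx
  by_cases h : x = 0
  · have hu : IsUnit (m : ZMod n) := (ZMod.isUnit_iff_coprime m n).mpr hm
    exact (hu.mul_left_eq_zero).mp h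
  · have hv : x.val ≠ 0 := fun hc => h ((ZMod.val_eq_zero x).mp hc)
    have hsub : (x - 1).val = x.val - 1 := by
      rw [ZMod.val_sub]
      · simp [ZMod.val_one_eq_one_mod, Nat.mod_eq_of_lt (by omega : 1 < n)]
      · rw [ZMod.val_one_eq_one_mod, Nat.mod_eq_of_lt (by omega : 1 < n)]; omega
    omega
end

section
/- Every rotational symbol sequence S[l,m,n] is primitive; that is, S[l,m,n] ≠ σ_i(S[l,m,n]) for all i not divisible by n. -/
/-- Every rotational symbol sequence is primitive: it differs from each of its
nontrivial cyclic shifts. -/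
theorem rss_primitive (n l m : ℕ) (hl : 0 < l) (hln : l < n)
    (hm : Nat.Coprime m n) :
    ∀ i : ZMod n, i ≠ 0 → rss n l m ≠ cycPerm i (rss n l m) := by
  intro i hi h
  haveI : NeZero n := ⟨by omega⟩
  haveI : Fact (1 < n) := ⟨by omega⟩
  have hinv : (m : ZMod n) * (m : ZMod n)⁻¹ = 1 := ZMod.coe_mul_inv_eq_one m hm
  set k : ZMod n := i * m with hk
  have hk0 : k ≠ 0 := by
    intro h0
    apply hi
    have : i * ((m : ZMod n) * (m : ZMod n)⁻¹) = 0 := by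
      rw [← mul_assoc, ← hk, h0, zero_mul]
    rwa [hinv, mul_one] at this
  have key : ∀ x : ZMod n, x.val < l ↔ (x + k).val < l := by
    intro x
    have hx := congrFun h (x * (m : ZMod n)⁻¹)
    simp only [rss, cycPerm, decide_eq_decide] at hx
    have e1 : x * (m : ZMod n)⁻¹ * m = x := by
      rw [mul_assoc, mul_comm ((m : ZMod n)⁻¹), hinv, mul_one]
    have e2 : (i + x * (m : ZMod n)⁻¹) * m = x + k := by
      rw [add_mul, e1, ← hk, add_comm]
    rw [e1, e2] at hx
    exact hx
  have trans_unique : ∀ y : ZMod n, y.val < l → ¬ (y + 1).val < l → y.val = l - 1 := by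
    intro y h1 h2
    have hv : (y + 1).val = (y.val + 1) % n := by
      rw [ZMod.val_add, ZMod.val_one]
    have hy : y.val < n := ZMod.val_lt y
    rcases Nat.lt_or_ge (y.val + 1) n with hc | hc
    · rw [Nat.mod_eq_of_lt hc] at hv
      omega
    · have : y.val + 1 = n := by omega
      rw [this, Nat.mod_self] at hv
      omega
  set a : ZMod n := ((l - 1 : ℕ) : ZMod n) with hadef
  have ha : a.val = l - 1 := ZMod.val_cast_of_lt (by omega)
  have ha1 : a + 1 = ((l : ℕ) : ZMod n) := by
    rw [hadef, Nat.cast_sub (by omega : 1 ≤ l)]; push_cast; ring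
  have hval1 : (a + 1).val = l := by rw [ha1]; exact ZMod.val_cast_of_lt hln
  -- transition at a + k
  have t1 : (a + k).val < l := (key a).mp (by omega)
  have t2 : ¬ ((a + k) + 1).val < l := by
    have : (a + k) + 1 = (a + 1) + k := by ring
    rw [this]
    intro hlt
    have := (key (a + 1)).mpr hlt
    omega
  have := trans_unique (a + k) t1 t2
  have heq : a + k = a := ZMod.val_injective n (by rw [this, ha])
  exact hk0 (add_eq_left.mp heq)
end

section
/- If 0 < m₁, m₂ < n/2 are distinct integers each coprime to n, and 1 < l < n-1, then S[l,m₁,n] is not a cyclic permutation of S[l,m₂,n]. -/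
/-- Card of the "sliding window overlap" set, transported to ℕ. -/
lemma card_slide {n l : ℕ} [NeZero n] (hln : l ≤ n) (b : ZMod n) :
    (Finset.univ.filter (fun i : ZMod n => i.val < l ∧ (i + b).val < l)).card
      = ((Finset.range l).filter (fun x => (x + b.val) % n < l)).card := by
  apply Finset.card_bij (fun i _ => i.val)
  · intro i hi
    simp only [Finset.mem_filter, Finset.mem_univ, true_and] at hi
    simp only [Finset.mem_filter, Finset.mem_range]
    refine ⟨hi.1, ?_⟩
    rw [← ZMod.val_add]
    exact hi.2
  · intro i _ j _ hij
    exact ZMod.val_injective n hij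
  · intro x hx
    simp only [Finset.mem_filter, Finset.mem_range] at hx
    have hxn : x < n := lt_of_lt_of_le hx.1 hln
    refine ⟨(x : ZMod n), ?_, ?_⟩
    · simp only [Finset.mem_filter, Finset.mem_univ, true_and]
      rw [ZMod.val_add, ZMod.val_cast_of_lt hxn]
      exact hx
    · exact ZMod.val_cast_of_lt hxn

/-- If `0 < m₁, m₂ < n/2` are distinct integers coprime to `n` and
`1 < l < n-1`, then `S[l,m₁,n]` is not a cyclic permutation of `S[l,m₂,n]`. -/
theorem rss_not_cyclic_perm (n l m₁ m₂ : ℕ)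
    (hm₁ : 0 < m₁) (hm₂ : 0 < m₂) (hm₁n : 2 * m₁ < n) (hm₂n : 2 * m₂ < n)
    (hne : m₁ ≠ m₂) (hc₁ : Nat.Coprime m₁ n) (hc₂ : Nat.Coprime m₂ n)
    (hl : 1 < l) (hln : l < n - 1) :
    ∀ k : ZMod n, rss n l m₁ ≠ cycPerm k (rss n l m₂) := by
  intro k h
  have hn3 : 3 ≤ n := by omega
  haveI : NeZero n := ⟨by omega⟩
  haveI : Fact (1 < n) := ⟨by omega⟩
  have hu1 : (m₁ : ZMod n) * (m₁ : ZMod n)⁻¹ = 1 := ZMod.coe_mul_inv_eq_one m₁ hc₁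
  have hu2 : (m₂ : ZMod n) * (m₂ : ZMod n)⁻¹ = 1 := ZMod.coe_mul_inv_eq_one m₂ hc₂
  set e : ZMod n := (m₁ : ZMod n)⁻¹ * (m₂ : ZMod n) with he
  set e' : ZMod n := (m₂ : ZMod n)⁻¹ * (m₁ : ZMod n) with he'
  set a : ZMod n := k * (m₂ : ZMod n) with ha
  have hee' : e * e' = 1 := by
    have : ((m₁:ZMod n)⁻¹ * m₂) * ((m₂:ZMod n)⁻¹ * m₁)
        = ((m₁:ZMod n) * (m₁:ZMod n)⁻¹) * ((m₂:ZMod n) * (m₂:ZMod n)⁻¹) := by ring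
    rw [he, he', this, hu1, hu2, one_mul]
  have H : ∀ i : ZMod n, (i.val < l ↔ (a + i * e).val < l) := by
    intro i
    have h2 := congrFun h (i * (m₁ : ZMod n)⁻¹)
    simp only [rss, cycPerm] at h2
    rw [show (i * (m₁:ZMod n)⁻¹ * m₁ : ZMod n) = i by
        rw [mul_assoc, mul_comm ((m₁:ZMod n)⁻¹), hu1, mul_one],
      show ((k + i * (m₁:ZMod n)⁻¹) * m₂ : ZMod n) = a + i * e by rw [ha, he]; ring] at h2
    exact decide_eq_decide.mp h2
  -- transfer the sliding-window count
  have hcard : (Finset.univ.filter (fun i : ZMod n => i.val < l ∧ (i + 1).val < l)).card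
      = (Finset.univ.filter (fun j : ZMod n => j.val < l ∧ (j + e).val < l)).card := by
    apply Finset.card_bij (fun i _ => a + i * e)
    · intro i hi
      simp only [Finset.mem_filter, Finset.mem_univ, true_and] at hi ⊢
      refine ⟨(H i).mp hi.1, ?_⟩
      have := (H (i + 1)).mp hi.2
      rwa [show a + (i+1) * e = a + i * e + e by ring] at this
    · intro i _ j _ hij
      have h3 : i * e = j * e := by
        simpa using add_left_cancel hij
      calc i = i * e * e' := by rw [mul_assoc, hee', mul_one]
        _ = j * e * e' := by rw [h3]
        _ = j := by rw [mul_assoc, hee', mul_one]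
    · intro j hj
      simp only [Finset.mem_filter, Finset.mem_univ, true_and] at hj
      have key : a + ((j - a) * e') * e = j := by
        rw [mul_assoc, mul_comm e' e, hee', mul_one]; ring
      refine ⟨(j - a) * e', ?_, key⟩
      simp only [Finset.mem_filter, Finset.mem_univ, true_and]
      constructor
      · rw [H ((j - a) * e'), key]; exact hj.1
      · rw [H ((j - a) * e' + 1), show a + ((j-a)*e' + 1) * e = a + ((j-a)*e') * e + e by ring,
          key]
        exact hj.2
  rw [card_slide (by omega) 1, card_slide (by omega) e] at hcard
  rw [ZMod.val_one n] at hcard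
  set c : ℕ := e.val with hc
  have hcn : c < n := ZMod.val_lt e
  have hc0 : c ≠ 0 := by
    intro h0
    have he0 : e = 0 := (ZMod.val_eq_zero e).mp h0
    have : (1 : ZMod n) = 0 := by rw [← hee', he0, zero_mul]
    exact one_ne_zero this
  -- compute the two nat cardinalities
  have h1 : ((Finset.range l).filter (fun x => (x + 1) % n < l)).card = l - 1 := by
    have : (Finset.range l).filter (fun x => (x + 1) % n < l) = Finset.range (l - 1) := by
      ext x
      simp only [Finset.mem_filter, Finset.mem_range]
      constructor
      · rintro ⟨hx1, hx2⟩
        rw [Nat.mod_eq_of_lt (by omega)] at hx2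
        omega
      · intro hx
        refine ⟨by omega, ?_⟩
        rw [Nat.mod_eq_of_lt (by omega)]
        omega
    rw [this, Finset.card_range]
  have h2 : ((Finset.range l).filter (fun x => (x + c) % n < l)).card
      = (l - c) + (l - (n - c)) := by
    have hset : (Finset.range l).filter (fun x => (x + c) % n < l)
        = Finset.range (l - c) ∪ Finset.Ico (n - c) l := by
      ext x
      simp only [Finset.mem_filter, Finset.mem_range, Finset.mem_union, Finset.mem_Ico]
      constructor
      · rintro ⟨hx1, hx2⟩
        by_cases hxc : x + c < n
        · rw [Nat.mod_eq_of_lt hxc] at hx2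
          left; omega
        · rw [Nat.mod_eq_sub_mod (by omega), Nat.mod_eq_of_lt (by omega)] at hx2
          right; omega
      · rintro (hx | hx)
        · refine ⟨by omega, ?_⟩
          rw [Nat.mod_eq_of_lt (by omega)]
          omega
        · refine ⟨hx.2, ?_⟩
          rw [Nat.mod_eq_sub_mod (by omega), Nat.mod_eq_of_lt (by omega)]
          omega
    rw [hset, Finset.card_union_of_disjoint, Finset.card_range, Nat.card_Ico]
    rw [Finset.disjoint_left]
    intro x hx1 hx2
    simp only [Finset.mem_range] at hx1
    simp only [Finset.mem_Ico] at hx2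
    omega
  rw [h1, h2] at hcard
  -- conclude c = 1 or c = n - 1
  have hcases : c = 1 ∨ c = n - 1 := by omega
  have hkey : ((c : ℕ) : ZMod n) = e := ZMod.natCast_zmod_val e
  have hm2e : (m₁ : ZMod n) * e = (m₂ : ZMod n) := by
    rw [he, ← mul_assoc, hu1, one_mul]
  rcases hcases with hc1 | hc1
  · -- e = 1, so m₁ = m₂
    have he1 : e = 1 := by rw [← hkey, hc1, Nat.cast_one]
    have : (m₁ : ZMod n) = (m₂ : ZMod n) := by rw [← hm2e, he1, mul_one]
    have := (ZMod.natCast_eq_natCast_iff' m₁ m₂ n).mp this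
    rw [Nat.mod_eq_of_lt (by omega), Nat.mod_eq_of_lt (by omega)] at this
    exact hne this
  · -- e = -1, so n ∣ m₁ + m₂
    have he1 : e = -1 := by
      rw [← hkey, hc1]
      have h5 : ((n - 1 : ℕ) : ZMod n) + 1 = 0 := by
        have h6 : (((n - 1) + 1 : ℕ) : ZMod n) = 0 := by
          rw [show n - 1 + 1 = n by omega]; exact ZMod.natCast_self n
        rwa [Nat.cast_add, Nat.cast_one] at h6
      exact eq_neg_of_add_eq_zero_left h5
    have hsum : ((m₁ + m₂ : ℕ) : ZMod n) = 0 := by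
      push_cast
      rw [← hm2e, he1]
      ring
    have := (ZMod.natCast_eq_zero_iff _ _).mp hsum
    have := Nat.le_of_dvd (by omega) this
    omega
end

section
/- For n ≥ 3, the number of rotational symbol sequences of length n that are distinct up to cyclic permutation equals 2 + ((n-3)/2)·φ(n), where φ is Euler's totient function. -/
/-!
Up to a shift, `S[l,m,n]` is the indicator of the interval `I = {0, …, l-1}` of `ℤ/n` pulled
back along `j ↦ j m`. Its number of `L`s is `l`, a shift invariant. The reflection
`x ↦ (l-1) - x` preserves `I`, so `m` and `-m` give the same class. Conversely, if `S[l,m₂,n]` is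
a shift of `S[l,m₁,n]`, then an affine map `x ↦ a + t x` with `t = m₁/m₂` preserves `I`; comparing
the numbers of pairs `(x, x+1)` and `(y, y+t)` inside `I` forces `t = ±1` when `2 ≤ l ≤ n-2`.
For `l = 1` and `l = n-1` every multiplier gives the same class. So the classes correspond to
`{1, n-1} ⊔ {2, …, n-2} × (ℤ/n)ˣ/{±1}`, which has `2 + (n-3) φ(n)/2` elements.
-/

namespace RotationalSymbolSeq

open Finset

variable {n : ℕ}

theorem mem_zpowers_neg_one_iff {G : Type*} [Group G] [HasDistribNeg G] (x : G) :
    x ∈ Subgroup.zpowers (-1) ↔ x = 1 ∨ x = -1 := by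
  refine ⟨fun ⟨k, hk⟩ => ?_, ?_⟩
  · rcases Int.even_or_odd k with hk' | hk'
    · exact .inl (hk ▸ hk'.neg_one_zpow)
    · exact .inr (hk ▸ hk'.neg_one_zpow)
  · rintro (rfl | rfl)
    · exact Subgroup.one_mem _
    · exact Subgroup.mem_zpowers _

theorem natCard_eq_card_quotient_zpowers_neg_one_mul_two {G : Type*} [Group G]
    [HasDistribNeg G] (h : (-1 : G) ≠ 1) :
    Nat.card G = Nat.card (G ⧸ Subgroup.zpowers (-1)) * 2 := by
  rw [Subgroup.card_eq_card_quotient_mul_card_subgroup, Nat.card_zpowers,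
    orderOf_eq_prime neg_one_sq h]

theorem card_filter_range_add_mod_lt {l s : ℕ} (hl : l ≤ n) (hs : s ≤ n) :
    #{v ∈ range l | (v + s) % n < l} = (l - s) + (l - (n - s)) := by
  have hsplit : {v ∈ range l | (v + s) % n < l} = range (l - s) ∪ Ico (n - s) l := by
    ext v
    simp only [mem_filter, mem_range, mem_union, mem_Ico]
    rcases lt_or_ge (v + s) n with h | h
    · rw [Nat.mod_eq_of_lt h]; omega
    · by_cases hv : v < l
      · rw [Nat.mod_eq_sub_mod h, Nat.mod_eq_of_lt (by omega)]; omega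
      · omega
  rw [hsplit, card_union_of_disjoint (disjoint_left.2 fun v hv hv' => by
    simp only [mem_range, mem_Ico] at hv hv'; omega), card_range, Nat.card_Ico]

section Interval

variable [NeZero n] {l : ℕ}

theorem natCard_val_lt_and (hl : l ≤ n) (P : ℕ → Prop) [DecidablePred P] :
    Nat.card {y : ZMod n // y.val < l ∧ P y.val} = #{v ∈ range l | P v} := by
  rw [← Nat.card_eq_finsetCard]
  refine Nat.card_congr
    { toFun := fun y => ⟨y.1.val, mem_filter.2 ⟨mem_range.2 y.2.1, y.2.2⟩⟩
      invFun := fun v => ⟨(v.1 : ZMod n), ?_⟩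
      left_inv := fun y => Subtype.ext (ZMod.natCast_zmod_val y.1)
      right_inv := fun v => Subtype.ext (ZMod.val_cast_of_lt ?_) }
  · obtain ⟨hv, hP⟩ := mem_filter.1 v.2
    rw [ZMod.val_cast_of_lt ((mem_range.1 hv).trans_le hl)]
    exact ⟨mem_range.1 hv, hP⟩
  · exact (mem_range.1 (mem_filter.1 v.2).1).trans_le hl

theorem natCard_val_lt (hl : l ≤ n) : Nat.card {y : ZMod n // y.val < l} = l := by
  simpa using natCard_val_lt_and hl (fun _ => True)

theorem natCard_val_lt_and_add_val_lt (hl : l ≤ n) (t : ZMod n) :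
    Nat.card {y : ZMod n // y.val < l ∧ (y + t).val < l} = (l - t.val) + (l - (n - t.val)) := by
  simp_rw [ZMod.val_add]
  rw [natCard_val_lt_and hl (fun v => (v + t.val) % n < l),
    card_filter_range_add_mod_lt hl t.val_lt.le]

theorem val_neg_one : (-1 : ZMod n).val = n - 1 := by
  obtain ⟨k, rfl⟩ := Nat.exists_eq_succ_of_ne_zero (NeZero.ne n)
  simp

theorem val_lt_pred_iff (x : ZMod n) : x.val < n - 1 ↔ x ≠ -1 := by
  rw [Ne, ← (ZMod.val_injective n).eq_iff, val_neg_one]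
  have := x.val_lt
  omega

/-- The affine map `x ↦ a + t x` sends the `l - 1` pairs `(x, x + 1)` inside `{val < l}`
bijectively onto the pairs `(y, y + t)` inside it, and only `t = ±1` gives `l - 1` of those. -/
theorem units_eq_one_or_neg_one_of_val_lt_iff (hl : 2 ≤ l) (hln : l + 2 ≤ n) (a : ZMod n)
    (t : (ZMod n)ˣ) (h : ∀ x, (a + t * x).val < l ↔ x.val < l) : t = 1 ∨ t = -1 := by
  have hpairs : Nat.card {x : ZMod n // x.val < l ∧ (x + 1).val < l} =
      Nat.card {y : ZMod n // y.val < l ∧ (y + t).val < l} :=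
    Nat.card_congr <| Equiv.subtypeEquiv ((Units.mulLeft t).trans (Equiv.addLeft a)) fun x => by
      simp only [Equiv.trans_apply, Units.mulLeft_apply, Equiv.coe_addLeft]
      rw [h, show a + t * x + t = a + t * (x + 1) by ring, h]
  rw [natCard_val_lt_and_add_val_lt (by omega), natCard_val_lt_and_add_val_lt (by omega),
    ZMod.val_one'' (by omega)] at hpairs
  have ht : (t : ZMod n).val = (1 : ZMod n).val ∨ (t : ZMod n).val = (-1 : ZMod n).val := by
    have := (t : ZMod n).val_lt
    rw [ZMod.val_one'' (by omega), val_neg_one]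
    omega
  rcases ht with ht | ht
  · exact .inl (Units.ext (ZMod.val_injective n ht))
  · exact .inr (Units.ext (ZMod.val_injective n ht))

/-- The reflection `x ↦ (l - 1) - x` preserves `{val < l}`. -/
theorem val_neg_lt_iff (hl : 0 < l) (hln : l ≤ n) (y : ZMod n) :
    (-y).val < l ↔ (((l - 1 : ℕ) : ZMod n) + y).val < l := by
  rw [ZMod.val_add, ZMod.val_cast_of_lt (by omega)]
  rcases eq_or_ne y 0 with rfl | hy
  · simp only [neg_zero, ZMod.val_zero, add_zero]
    rw [Nat.mod_eq_of_lt (by omega)]; omega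
  · have : NeZero y := ⟨hy⟩
    have hpos : 0 < y.val := ZMod.val_pos.2 hy
    have := y.val_lt
    rw [ZMod.val_neg_of_ne_zero]
    rcases lt_or_ge (l - 1 + y.val) n with h | h
    · rw [Nat.mod_eq_of_lt h]; omega
    · rw [Nat.mod_eq_sub_mod h, Nat.mod_eq_of_lt (by omega)]; omega

end Interval

theorem cycPerm_cycPerm (a b : ZMod n) (S : SymbolSeq n) :
    cycPerm a (cycPerm b S) = cycPerm (b + a) S := by
  funext j; simp only [cycPerm, add_assoc]

theorem cycPerm_zero (S : SymbolSeq n) : cycPerm 0 S = S := by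
  funext j; simp only [cycPerm, zero_add]

def rotSeq (l : ℕ) (u : ZMod n) : SymbolSeq n :=
  fun j => decide ((j * u).val < l)

theorem rss_eq_rotSeq (l m : ℕ) : rss n l m = rotSeq l (m : ZMod n) := rfl

noncomputable def numL (S : SymbolSeq n) : ℕ := Nat.card {j // S j = true}

theorem numL_cycPerm (k : ZMod n) (S : SymbolSeq n) : numL (cycPerm k S) = numL S :=
  Nat.card_congr (Equiv.subtypeEquiv (Equiv.addLeft k) fun _ => Iff.rfl)

theorem rotSeq_one_left (u : (ZMod n)ˣ) : rotSeq 1 (u : ZMod n) = rotSeq 1 1 := by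
  funext j
  simp only [rotSeq, Nat.lt_one_iff, ZMod.val_eq_zero, mul_one, Units.mul_left_eq_zero]

section Classification

variable [NeZero n] {l : ℕ}

theorem numL_rotSeq (hl : l ≤ n) (u : (ZMod n)ˣ) : numL (rotSeq l (u : ZMod n)) = l := by
  refine (Nat.card_congr (Equiv.subtypeEquiv (Units.mulRight u) fun x => ?_)).trans
    (natCard_val_lt hl)
  simp only [rotSeq, decide_eq_true_eq, Units.mulRight_apply]

theorem eq_of_rotSeq_eq_cycPerm {l' : ℕ} (hl : l ≤ n) (hl' : l' ≤ n) {u v : (ZMod n)ˣ}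
    {k : ZMod n} (h : rotSeq l' (v : ZMod n) = cycPerm k (rotSeq l u)) : l' = l := by
  rw [← numL_rotSeq hl' v, h, numL_cycPerm, numL_rotSeq hl]

theorem eq_or_eq_neg_of_rotSeq_eq_cycPerm (hl : 2 ≤ l) (hln : l + 2 ≤ n) {u v : (ZMod n)ˣ}
    {k : ZMod n} (h : rotSeq l (v : ZMod n) = cycPerm k (rotSeq l u)) : v = u ∨ v = -u := by
  have hpres : ∀ x, (k * u + ((v⁻¹ * u : (ZMod n)ˣ) : ZMod n) * x).val < l ↔ x.val < l := by
    intro x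
    have := congrFun h (x * ↑v⁻¹)
    simp only [rotSeq, cycPerm, Units.inv_mul_cancel_right, decide_eq_decide] at this
    rw [this]; push_cast; ring_nf
  rcases units_eq_one_or_neg_one_of_val_lt_iff hl hln _ _ hpres with ht | ht
  · exact .inl (inv_mul_eq_one.1 ht)
  · right; rw [inv_mul_eq_iff_eq_mul, mul_neg_one] at ht; rw [ht, neg_neg]

theorem rotSeq_neg (hl : 0 < l) (hln : l ≤ n) (u : (ZMod n)ˣ) :
    rotSeq l ((-u : (ZMod n)ˣ) : ZMod n) =
      cycPerm (((l - 1 : ℕ) : ZMod n) * ((u⁻¹ : (ZMod n)ˣ) : ZMod n)) (rotSeq l u) := by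
  funext j
  simp only [rotSeq, cycPerm, Units.val_neg, mul_neg, add_mul, Units.inv_mul_cancel_right]
  exact decide_eq_decide.2 (val_neg_lt_iff hl hln _)

theorem rotSeq_pred (u : (ZMod n)ˣ) :
    rotSeq (n - 1) (u : ZMod n) =
      cycPerm (((u⁻¹ : (ZMod n)ˣ) : ZMod n) - 1) (rotSeq (n - 1) 1) := by
  funext j
  simp only [rotSeq, cycPerm, mul_one, val_lt_pred_iff]
  refine decide_eq_decide.2 (not_congr ?_)
  rw [← Units.eq_mul_inv_iff_mul_eq, ← eq_sub_iff_add_eq', neg_one_mul,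
    show (-1 : ZMod n) - (↑u⁻¹ - 1) = -↑u⁻¹ by ring]

theorem exists_rotSeq_eq_cycPerm_mul (hl : 0 < l) (hln : l ≤ n) (u : (ZMod n)ˣ)
    {h : (ZMod n)ˣ} (hh : h ∈ Subgroup.zpowers (-1)) :
    ∃ k, rotSeq l (u : ZMod n) = cycPerm k (rotSeq l ((u * h : (ZMod n)ˣ) : ZMod n)) := by
  rcases (mem_zpowers_neg_one_iff h).1 hh with rfl | rfl
  · exact ⟨0, by rw [mul_one, cycPerm_zero]⟩
  · rw [mul_neg_one]
    exact ⟨_, by rw [← rotSeq_neg hl hln (-u), neg_neg]⟩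

end Classification

abbrev RssShift (n : ℕ) := {S : SymbolSeq n // ∃ l m : ℕ, ∃ k : ZMod n, 0 < l ∧ l < n ∧
  Nat.Coprime m n ∧ S = cycPerm k (rss n l m)}

def shiftRel (n : ℕ) (S T : RssShift n) : Prop := ∃ k : ZMod n, T.1 = cycPerm k S.1

theorem shiftRel_equivalence : Equivalence (shiftRel n) where
  refl S := ⟨0, (cycPerm_zero _).symm⟩
  symm := by
    rintro S T ⟨k, hk⟩
    exact ⟨-k, by rw [hk, cycPerm_cycPerm, add_neg_cancel, cycPerm_zero]⟩
  trans := by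
    rintro S T U ⟨k, hk⟩ ⟨k', hk'⟩
    exact ⟨k + k', by rw [hk', hk, cycPerm_cycPerm]⟩

section Classes

variable [NeZero n] {l l' : ℕ}

def rotClass (hl : 0 < l) (hln : l < n) (u : (ZMod n)ˣ) : Quot (shiftRel n) :=
  Quot.mk _ ⟨rotSeq l (u : ZMod n), l, (u : ZMod n).val, 0, hl, hln, ZMod.val_coe_unit_coprime u,
    by rw [cycPerm_zero, rss_eq_rotSeq, ZMod.natCast_zmod_val]⟩

theorem rotClass_eq_iff {hl : 0 < l} {hln : l < n} {hl' : 0 < l'} {hln' : l' < n}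
    {u v : (ZMod n)ˣ} :
    rotClass hl hln u = rotClass hl' hln' v ↔
      ∃ k, rotSeq l' (v : ZMod n) = cycPerm k (rotSeq l u) :=
  ⟨fun h => shiftRel_equivalence.eqvGen_iff.1 (Quot.eqvGen_exact h), fun h => Quot.sound h⟩

theorem rotClass_eq_mk {hl : 0 < l} {hln : l < n} {u : (ZMod n)ˣ} {S : RssShift n} {k : ZMod n}
    (h : S.1 = cycPerm k (rotSeq l u)) : rotClass hl hln u = Quot.mk _ S :=
  Quot.sound ⟨k, h⟩

noncomputable def classOf (hn : 3 ≤ n) :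
    Bool ⊕ (Fin (n - 3) × ((ZMod n)ˣ ⧸ Subgroup.zpowers (-1))) → Quot (shiftRel n)
  | .inl true => rotClass (l := 1) (by omega) (by omega) 1
  | .inl false => rotClass (l := n - 1) (by omega) (by omega) 1
  | .inr (i, q) => rotClass (l := i + 2) (by omega) (by omega) q.out

theorem classOf_injective (hn : 3 ≤ n) : Function.Injective (classOf hn) := by
  rintro ((_ | _) | ⟨i, q⟩) ((_ | _) | ⟨j, r⟩) h <;> dsimp only [classOf] at h <;>
    obtain ⟨k, hk⟩ := rotClass_eq_iff.1 h <;>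
    have hl := eq_of_rotSeq_eq_cycPerm (by omega) (by omega) hk
  -- the lengths `1`, `n - 1` and `i + 2` already separate all cases but the last one
  all_goals first | rfl | omega | skip
  obtain rfl : i = j := Fin.ext (by omega)
  suffices q = r from this ▸ rfl
  rw [← QuotientGroup.out_eq' q, ← QuotientGroup.out_eq' r, QuotientGroup.eq,
    mem_zpowers_neg_one_iff]
  rcases eq_or_eq_neg_of_rotSeq_eq_cycPerm (by omega) (by omega) hk with h' | h' <;>
    simp [h']

theorem classOf_surjective (hn : 3 ≤ n) : Function.Surjective (classOf hn) := by
  rintro ⟨S, l, m, k, hl, hln, hm, hS⟩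
  simp only [Sum.exists, classOf]
  obtain ⟨u, hu⟩ : ∃ u : (ZMod n)ˣ, (u : ZMod n) = m :=
    ⟨ZMod.unitOfCoprime m hm, ZMod.coe_unitOfCoprime m hm⟩
  replace hS : S = cycPerm k (rotSeq l (u : ZMod n)) := by rw [hS, rss_eq_rotSeq, hu]
  rcases (show l = 1 ∨ l = n - 1 ∨ 2 ≤ l ∧ l + 2 ≤ n by omega) with rfl | rfl | hmid
  · exact .inl ⟨true, rotClass_eq_mk (hS.trans (by rw [rotSeq_one_left, Units.val_one]))⟩
  · exact .inl ⟨false, rotClass_eq_mk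
      (hS.trans (by rw [rotSeq_pred, cycPerm_cycPerm, Units.val_one]))⟩
  · obtain ⟨h, hh⟩ := QuotientGroup.mk_out_eq_mul (Subgroup.zpowers (-1)) u
    obtain ⟨c, hc⟩ := exists_rotSeq_eq_cycPerm_mul hl hln.le u h.2
    refine .inr ⟨(⟨l - 2, by omega⟩, u), rotClass_eq_mk (k := c + k) ?_⟩
    refine hS.trans ?_
    rw [Nat.sub_add_cancel hmid.1, hh, hc, cycPerm_cycPerm]

end Classes

end RotationalSymbolSeq

/-- The number of rotational symbol sequences of length `n` distinct up to
cyclic permutation is `2 + ((n-3)/2)·φ(n)` for `n ≥ 3`. -/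
theorem card_rss_classes (n : ℕ) (hn : 3 ≤ n) :
    Nat.card (Quot (fun (S T : {S : SymbolSeq n //
        ∃ l m : ℕ, ∃ k : ZMod n, 0 < l ∧ l < n ∧ Nat.Coprime m n ∧
          S = cycPerm k (rss n l m)}) =>
      ∃ k : ZMod n, (T : SymbolSeq n) = cycPerm k (S : SymbolSeq n))) =
    2 + (n - 3) * Nat.totient n / 2 := by
  have : NeZero n := ⟨by omega⟩
  have : Fact (2 < n) := ⟨by omega⟩
  have hneg : (-1 : (ZMod n)ˣ) ≠ 1 := fun h => ZMod.neg_one_ne_one (congrArg Units.val h)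
  change Nat.card (Quot (RotationalSymbolSeq.shiftRel n)) = _
  rw [← Nat.card_eq_of_bijective _ ⟨RotationalSymbolSeq.classOf_injective hn,
      RotationalSymbolSeq.classOf_surjective hn⟩,
    ← ZMod.card_units_eq_totient, ← Nat.card_eq_fintype_card,
    RotationalSymbolSeq.natCard_eq_card_quotient_zpowers_neg_one_mul_two hneg]
  simp [← mul_assoc]
end

section
/- Suppose x₀ solves the n-cycle solution system (I - M_S)x₀ = μ P_S b for the symbol sequence S, and its i-th iterate x_i under the maps prescribed by S has first component zero. Then x₀ also solves the n-cycle solution system of the sequence S with its i-th symbol flipped. -/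
open Matrix

/-- The stability matrix built from the first `k` symbols:
`Mmat A S k = A_{S_{k-1}} ⋯ A_{S_0}`; the stability matrix of `S` is
`M_S = Mmat A S n`. -/
def Mmat {N n : ℕ} (A : Bool → Matrix (Fin (N + 1)) (Fin (N + 1)) ℝ)
    (S : SymbolSeq n) : ℕ → Matrix (Fin (N + 1)) (Fin (N + 1)) ℝ
  | 0 => 1
  | k + 1 => A (S (k : ZMod n)) * Mmat A S k

/-- The border-collision matrix built from the first `k` symbols, via
`P_0 = 0`, `P_{k+1} = A_{S_k} P_k + I`; so
`P_S = Pmat A S n = I + A_{S_{n-1}} + ⋯ + A_{S_{n-1}}⋯A_{S_1}`. -/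
def Pmat {N n : ℕ} (A : Bool → Matrix (Fin (N + 1)) (Fin (N + 1)) ℝ)
    (S : SymbolSeq n) : ℕ → Matrix (Fin (N + 1)) (Fin (N + 1)) ℝ
  | 0 => 0
  | k + 1 => A (S (k : ZMod n)) * Pmat A S k + 1

/-- The iterates of `x₀` under the affine maps `x ↦ μb + A_{S_i} x` in the
order determined by `S`. -/
def orb {N n : ℕ} (A : Bool → Matrix (Fin (N + 1)) (Fin (N + 1)) ℝ)
    (S : SymbolSeq n) (b : Fin (N + 1) → ℝ) (μ : ℝ)
    (x₀ : Fin (N + 1) → ℝ) : ℕ → Fin (N + 1) → ℝ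
  | 0 => x₀
  | k + 1 => μ • b + (A (S (k : ZMod n))).mulVec (orb A S b μ x₀ k)

/-- Flip (`L ↔ R`) the entry of `S` at index `i`. -/
def flipAt {n : ℕ} (i : ZMod n) (S : SymbolSeq n) : SymbolSeq n :=
  fun j => if j = i then !(S j) else S j

lemma orb_eq {N n : ℕ} (A : Bool → Matrix (Fin (N + 1)) (Fin (N + 1)) ℝ)
    (S : SymbolSeq n) (b : Fin (N + 1) → ℝ) (μ : ℝ) (x₀ : Fin (N + 1) → ℝ) :
    ∀ k, orb A S b μ x₀ k = (Mmat A S k).mulVec x₀ + μ • (Pmat A S k).mulVec b := by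
  intro k
  induction k with
  | zero => simp [orb, Mmat, Pmat]
  | succ k ih =>
    simp only [orb, Mmat, Pmat, ih, Matrix.mulVec_add, Matrix.mulVec_smul,
      Matrix.add_mulVec, Matrix.one_mulVec, ← Matrix.mulVec_mulVec, smul_add]
    module

lemma mulVec_agree {N : ℕ} (A : Bool → Matrix (Fin (N + 1)) (Fin (N + 1)) ℝ)
    (hAgree : ∀ j : Fin (N + 1), j ≠ 0 → ∀ i, A true i j = A false i j)
    (x : Fin (N + 1) → ℝ) (hx : x 0 = 0) (b₁ b₂ : Bool) :
    (A b₁).mulVec x = (A b₂).mulVec x := by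
  funext r
  simp only [Matrix.mulVec, dotProduct]
  refine Finset.sum_congr rfl fun j _ => ?_
  by_cases hj : j = 0
  · subst hj; simp [hx]
  · cases b₁ <;> cases b₂ <;> simp [hAgree j hj r]

/-- If `x₀` solves the `n`-cycle solution system `(I - M_S)x₀ = μ P_S b` of `S`
and its `i`-th iterate has zero first component, then `x₀` also solves the
`n`-cycle solution system of `S` with its `i`-th symbol flipped. -/
theorem solves_flip {N n : ℕ} (A : Bool → Matrix (Fin (N + 1)) (Fin (N + 1)) ℝ)
    (hAgree : ∀ j : Fin (N + 1), j ≠ 0 → ∀ i, A true i j = A false i j)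
    (S : SymbolSeq n) (b : Fin (N + 1) → ℝ) (μ : ℝ) (x₀ : Fin (N + 1) → ℝ)
    (hx : (1 - Mmat A S n).mulVec x₀ = μ • (Pmat A S n).mulVec b)
    (i : ℕ) (hi : i < n) (hsi : orb A S b μ x₀ i 0 = 0) :
    (1 - Mmat A (flipAt (i : ZMod n) S) n).mulVec x₀ =
      μ • (Pmat A (flipAt (i : ZMod n) S) n).mulVec b := by
  set S' := flipAt (i : ZMod n) S with hS'
  -- key: orbits agree up to n
  have horb : ∀ k, k ≤ n → orb A S' b μ x₀ k = orb A S b μ x₀ k := by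
    intro k hk
    induction k with
    | zero => rfl
    | succ k ih =>
      have hk' : k ≤ n := Nat.le_of_succ_le hk
      have ihe := ih hk'
      by_cases hki : k = i
      · subst hki
        simp only [orb, ihe]
        congr 1
        exact mulVec_agree A hAgree _ hsi _ _
      · have hne : (k : ZMod n) ≠ (i : ZMod n) := by
          intro h
          apply hki
          have := (ZMod.natCast_eq_natCast_iff _ _ _).mp h
          have := Nat.ModEq.eq_of_lt_of_lt this (Nat.lt_of_succ_le hk) hi
          exact this
        simp only [orb, ihe]
        congr 2
        simp [hS', flipAt, hne]
  -- convert hypothesis and goal to fixed-point form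
  have key : ∀ (T : SymbolSeq n),
      ((1 - Mmat A T n).mulVec x₀ = μ • (Pmat A T n).mulVec b ↔
        orb A T b μ x₀ n = x₀) := by
    intro T
    rw [orb_eq, Matrix.sub_mulVec, Matrix.one_mulVec, sub_eq_iff_eq_add]
    constructor
    · intro h; exact (add_comm _ _).trans h.symm
    · intro h; exact ((add_comm _ _).trans h).symm
  rw [key]
  rw [horb n le_rfl]
  exact (key S).mp hx
end

section
/- Suppose x and x̂ solve the n-cycle solution systems of S and of S with its 0-th symbol flipped, respectively. Then det(I - M_S)·(e₁ᵀx) = det(I - M_{S^{0̄}})·(e₁ᵀx̂). -/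
open Matrix

/-!
Multiplying the system `(I - M) x = μ P b` by `adj(I - M)` gives `det(I - M) • x = adj(I - M) (μ P b)`
(Cramer's rule), so `det(I - M) · x₀` is the first row of `adj(I - M)` applied to `μ P b`.
Flipping `S₀` leaves `P` unchanged and changes `M` only in its first column, and the first row
of an adjugate is made of cofactors of the first column, so it does not change either.
-/

/-- The `i`-th row of `adj B` consists of cofactors of the `i`-th column of `B`, so it does not
depend on that column. -/
theorem adjugate_row_eq_of_forall_ne {α : Type*} [CommRing α] {m : ℕ}
    {B B' : Matrix (Fin (m + 1)) (Fin (m + 1)) α} {i : Fin (m + 1)}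
    (h : ∀ k l, l ≠ i → B k l = B' k l) : adjugate B i = adjugate B' i := by
  funext j
  rw [adjugate_fin_succ_eq_det_submatrix, adjugate_fin_succ_eq_det_submatrix]
  congr 2
  ext k l
  exact h _ _ (Fin.succAbove_ne i l)

theorem det_smul_eq_adjugate_mulVec {α ι : Type*} [CommRing α] [Fintype ι] [DecidableEq ι]
    {B : Matrix ι ι α} {x c : ι → α} (h : B *ᵥ x = c) : B.det • x = adjugate B *ᵥ c := by
  rw [← h, mulVec_mulVec, adjugate_mul, smul_mulVec, one_mulVec]

theorem natCast_ne_zero_of_pos_of_lt {n m : ℕ} (h0 : 0 < m) (hm : m < n) :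
    (m : ZMod n) ≠ 0 := by
  rw [Ne, ZMod.natCast_eq_zero_iff]
  exact Nat.not_dvd_of_pos_of_lt h0 hm

section Flip

variable {N n : ℕ} (A : Bool → Matrix (Fin (N + 1)) (Fin (N + 1)) ℝ) (S : SymbolSeq n)

theorem flipAt_zero_natCast {m : ℕ} (h0 : 0 < m) (hm : m < n) :
    flipAt 0 S (m : ZMod n) = S (m : ZMod n) :=
  if_neg (natCast_ne_zero_of_pos_of_lt h0 hm)

/-- `P_0 = 0` absorbs the factor `A_{S_0}`, the only one that sees the flipped symbol. -/
theorem Pmat_flipAt_zero {m : ℕ} (hm : m ≤ n) : Pmat A (flipAt 0 S) m = Pmat A S m := by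
  induction m with
  | zero => rfl
  | succ m ih =>
    rcases m.eq_zero_or_pos with rfl | hpos
    · simp only [Pmat, mul_zero]
    · simp only [Pmat, flipAt_zero_natCast S hpos hm, ih (by omega)]

theorem Mmat_flipAt_zero_apply_of_ne_zero
    (hAgree : ∀ j : Fin (N + 1), j ≠ 0 → ∀ i, A true i j = A false i j)
    {m : ℕ} (hm : m ≤ n) {i j : Fin (N + 1)} (hj : j ≠ 0) :
    Mmat A (flipAt 0 S) m i j = Mmat A S m i j := by
  induction m generalizing i with
  | zero => rfl
  | succ m ih =>
    rcases m.eq_zero_or_pos with rfl | hpos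
    · have hcol : ∀ s t : Bool, A s i j = A t i j := by
        intro s t
        cases s <;> cases t <;> simp only [hAgree j hj i]
      simpa only [Mmat, mul_one] using hcol _ _
    · simp only [Mmat, flipAt_zero_natCast S hpos hm, mul_apply, ih (by omega)]

end Flip

/-- If `x` and `x̂` solve the `n`-cycle solution systems of `S` and of `S` with
its `0`-th symbol flipped, then
`det(I - M_S)·(e₁ᵀx) = det(I - M_{S^0̄})·(e₁ᵀx̂)`. -/
theorem det_mul_first_component_eq {N n : ℕ}
    (A : Bool → Matrix (Fin (N + 1)) (Fin (N + 1)) ℝ)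
    (hAgree : ∀ j : Fin (N + 1), j ≠ 0 → ∀ i, A true i j = A false i j)
    (S : SymbolSeq n) (b : Fin (N + 1) → ℝ) (μ : ℝ)
    (x xhat : Fin (N + 1) → ℝ)
    (hx : (1 - Mmat A S n).mulVec x = μ • (Pmat A S n).mulVec b)
    (hxhat : (1 - Mmat A (flipAt 0 S) n).mulVec xhat =
      μ • (Pmat A (flipAt 0 S) n).mulVec b) :
    (1 - Mmat A S n).det * x 0 = (1 - Mmat A (flipAt 0 S) n).det * xhat 0 := by
  rw [Pmat_flipAt_zero A S le_rfl] at hxhat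
  have hrow : adjugate (1 - Mmat A S n) 0 = adjugate (1 - Mmat A (flipAt 0 S) n) 0 :=
    adjugate_row_eq_of_forall_ne fun i j hj => by
      simp only [Matrix.sub_apply, Mmat_flipAt_zero_apply_of_ne_zero A S hAgree le_rfl hj]
  calc (1 - Mmat A S n).det * x 0
      = (adjugate (1 - Mmat A S n) *ᵥ (μ • Pmat A S n *ᵥ b)) 0 :=
        congrFun (det_smul_eq_adjugate_mulVec hx) 0
    _ = (adjugate (1 - Mmat A (flipAt 0 S) n) *ᵥ (μ • Pmat A S n *ᵥ b)) 0 := by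
        simp only [mulVec, hrow]
    _ = (1 - Mmat A (flipAt 0 S) n).det * xhat 0 :=
        (congrFun (det_smul_eq_adjugate_mulVec hxhat) 0).symm
end

section
/- Suppose (I - M_S) is nonsingular, μ ≠ 0, and ϱᵀb ≠ 0, where ϱᵀ is the common first row of adj(I-A_L) and adj(I-A_R). Then the point x₀ = μ(I - M_S)⁻¹ P_S b has first component zero if and only if P_S is singular. -/
open Matrix

/-- Row 0 of the adjugate of an `(N+1) × (N+1)` matrix depends only on the
columns other than column 0. -/
lemma adj_row0_eq {N : ℕ} (X Y : Matrix (Fin (N + 1)) (Fin (N + 1)) ℝ)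
    (h : ∀ i j, j ≠ 0 → X i j = Y i j) (j : Fin (N + 1)) :
    X.adjugate 0 j = Y.adjugate 0 j := by
  rw [Matrix.adjugate_apply, Matrix.adjugate_apply,
    Matrix.det_succ_column_zero, Matrix.det_succ_column_zero]
  refine Finset.sum_congr rfl fun i _ => ?_
  by_cases hij : i = j
  · subst hij
    rw [Matrix.updateRow_self, Matrix.updateRow_self]
    have hsub : (X.updateRow i (Pi.single 0 1)).submatrix i.succAbove Fin.succ
        = (Y.updateRow i (Pi.single 0 1)).submatrix i.succAbove Fin.succ := by
      ext k l
      simp only [Matrix.submatrix_apply]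
      rw [Matrix.updateRow_ne (Fin.succAbove_ne i k),
        Matrix.updateRow_ne (Fin.succAbove_ne i k)]
      exact h _ _ (Fin.succ_ne_zero l)
    rw [hsub]
  · obtain ⟨z, hz⟩ := Fin.exists_succAbove_eq (show j ≠ i from fun hc => hij hc.symm)
    have hX : ((X.updateRow j (Pi.single 0 1)).submatrix i.succAbove Fin.succ).det = 0 := by
      apply Matrix.det_eq_zero_of_row_eq_zero z
      intro l
      simp only [Matrix.submatrix_apply, hz, Matrix.updateRow_self]
      exact Pi.single_eq_of_ne (Fin.succ_ne_zero l) 1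
    have hY : ((Y.updateRow j (Pi.single 0 1)).submatrix i.succAbove Fin.succ).det = 0 := by
      apply Matrix.det_eq_zero_of_row_eq_zero z
      intro l
      simp only [Matrix.submatrix_apply, hz, Matrix.updateRow_self]
      exact Pi.single_eq_of_ne (Fin.succ_ne_zero l) 1
    rw [hX, hY, mul_zero, mul_zero]

/-- `1 - M_k` agrees with `P_k (1 - A_L)` except possibly in column 0. -/
lemma decomp_col {N n : ℕ} (A : Bool → Matrix (Fin (N + 1)) (Fin (N + 1)) ℝ)
    (hAgree : ∀ j : Fin (N + 1), j ≠ 0 → ∀ i, A true i j = A false i j)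
    (S : SymbolSeq n) (k : ℕ) :
    ∀ i j, j ≠ 0 → (1 - Mmat A S k - Pmat A S k * (1 - A true)) i j = 0 := by
  induction k with
  | zero =>
    intro i j hj
    simp [Mmat, Pmat]
  | succ k ih =>
    have hkey : 1 - Mmat A S (k + 1) - Pmat A S (k + 1) * (1 - A true)
        = (A true - A (S (k : ZMod n)))
          + A (S (k : ZMod n)) * (1 - Mmat A S k - Pmat A S k * (1 - A true)) := by
      show 1 - A (S (k : ZMod n)) * Mmat A S k
          - (A (S (k : ZMod n)) * Pmat A S k + 1) * (1 - A true) = _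
      noncomm_ring
    intro i j hj
    rw [hkey, Matrix.add_apply, Matrix.mul_apply]
    have h1 : (A true - A (S (k : ZMod n))) i j = 0 := by
      cases hS : S (k : ZMod n) with
      | true => simp
      | false => simp [Matrix.sub_apply, hAgree j hj i]
    rw [h1, zero_add]
    exact Finset.sum_eq_zero fun l _ => by rw [ih l j hj, mul_zero]

/-- Lemma 4 (border collision): if `I - M_S` is nonsingular, `μ ≠ 0` and
`ϱᵀb ≠ 0` (where `ϱᵀ` is the common first row of `adj(I-A_L)` and
`adj(I-A_R)`), then the point `x₀ = μ(I - M_S)⁻¹ P_S b` lies on the switching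
manifold (has zero first component) iff `P_S` is singular. -/
theorem first_component_zero_iff_P_singular {N n : ℕ}
    (A : Bool → Matrix (Fin (N + 1)) (Fin (N + 1)) ℝ)
    (hAgree : ∀ j : Fin (N + 1), j ≠ 0 → ∀ i, A true i j = A false i j)
    (S : SymbolSeq n) (b : Fin (N + 1) → ℝ) (μ : ℝ)
    (hM : (1 - Mmat A S n).det ≠ 0) (hμ : μ ≠ 0)
    (hb : (1 - A true).adjugate 0 ⬝ᵥ b ≠ 0) :
    (μ • ((1 - Mmat A S n)⁻¹.mulVec ((Pmat A S n).mulVec b))) 0 = 0 ↔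
      (Pmat A S n).det = 0 := by
  have hcols : ∀ i j, j ≠ 0 →
      (1 - Mmat A S n) i j = (Pmat A S n * (1 - A true)) i j := by
    intro i j hj
    have h := decomp_col A hAgree S n i j hj
    rw [Matrix.sub_apply] at h
    exact sub_eq_zero.mp h
  have hrow : ∀ j, (1 - Mmat A S n).adjugate 0 j
      = ((1 - A true).adjugate * (Pmat A S n).adjugate) 0 j := by
    intro j
    rw [← Matrix.adjugate_mul_distrib]
    exact adj_row0_eq _ _ hcols j
  have hrow2 : ∀ j, ((1 - Mmat A S n).adjugate * Pmat A S n) 0 j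
      = (Pmat A S n).det * (1 - A true).adjugate 0 j := by
    intro j
    have h1 : ((1 - Mmat A S n).adjugate * Pmat A S n) 0 j
        = ((1 - A true).adjugate * (Pmat A S n).adjugate * Pmat A S n) 0 j := by
      rw [Matrix.mul_apply, Matrix.mul_apply]
      exact Finset.sum_congr rfl fun k _ => by rw [hrow k]
    rw [h1, Matrix.mul_assoc, Matrix.adjugate_mul, Matrix.mul_smul, Matrix.mul_one,
      Matrix.smul_apply, smul_eq_mul]
  have hvec : ((1 - Mmat A S n).adjugate * Pmat A S n).mulVec b 0
      = (Pmat A S n).det * ((1 - A true).adjugate 0 ⬝ᵥ b) := by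
    show (((1 - Mmat A S n).adjugate * Pmat A S n) 0 ⬝ᵥ b) = _
    simp only [dotProduct]
    rw [Finset.mul_sum]
    exact Finset.sum_congr rfl fun j _ => by rw [hrow2 j, mul_assoc]
  have hinv : (1 - Mmat A S n)⁻¹
      = ((1 - Mmat A S n).det)⁻¹ • (1 - Mmat A S n).adjugate := by
    rw [Matrix.inv_def, Ring.inverse_eq_inv]
  rw [Pi.smul_apply, smul_eq_mul, hinv, Matrix.smul_mulVec, Pi.smul_apply,
    Matrix.mulVec_mulVec, smul_eq_mul, hvec]
  have hd : ((1 - Mmat A S n).det)⁻¹ ≠ 0 := inv_ne_zero hM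
  constructor
  · intro h
    rcases mul_eq_zero.mp h with h | h
    · exact absurd h hμ
    rcases mul_eq_zero.mp h with h | h
    · exact absurd h hd
    rcases mul_eq_zero.mp h with h | h
    · exact h
    · exact absurd h hb
  · intro h
    rw [h, zero_mul, mul_zero, mul_zero]
end

section
/- Suppose P_S is nonsingular, μ ≠ 0, and ϱᵀb ≠ 0. Then the linear system (I - M_S)x = μ P_S b has a solution if and only if (I - M_S) is nonsingular. -/
open Matrix

private lemma adj_row_zero_eq {N : ℕ} (X Y : Matrix (Fin (N + 1)) (Fin (N + 1)) ℝ)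
    (h : ∀ i j, j ≠ 0 → X i j = Y i j) :
    X.adjugate 0 = Y.adjugate 0 := by
  funext j
  rw [adjugate_apply, adjugate_apply]
  have key : ∀ Z : Matrix (Fin (N + 1)) (Fin (N + 1)) ℝ,
      (Z.updateRow j (Pi.single (0 : Fin (N+1)) (1:ℝ))).det
        = (-1) ^ (j : ℕ) * (Z.submatrix j.succAbove Fin.succ).det := by
    intro Z
    rw [det_succ_column_zero, Finset.sum_eq_single j]
    · have h1 : (Z.updateRow j (Pi.single (0 : Fin (N+1)) (1:ℝ))) j 0 = 1 := by simp
      have h2 : (Z.updateRow j (Pi.single (0 : Fin (N+1)) (1:ℝ))).submatrix j.succAbove Fin.succ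
          = Z.submatrix j.succAbove Fin.succ := by
        funext r c
        simp [Matrix.updateRow_apply, (Fin.succAbove_ne j r)]
      rw [h1, h2, mul_one]
    · intro i _ hij
      have : ((Z.updateRow j (Pi.single (0 : Fin (N+1)) (1:ℝ))).submatrix i.succAbove Fin.succ).det = 0 := by
        obtain ⟨r, hr⟩ := Fin.exists_succAbove_eq (Ne.symm hij)
        apply det_eq_zero_of_row_eq_zero r
        intro c
        simp [hr, Fin.succ_ne_zero c]
      rw [this, mul_zero]
    · intro h'; exact absurd (Finset.mem_univ j) h'
  rw [key X, key Y]
  have h3 : X.submatrix j.succAbove Fin.succ = Y.submatrix j.succAbove Fin.succ := by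
    funext r c
    exact h _ _ (Fin.succ_ne_zero c)
  rw [h3]

private lemma key_cols {N n : ℕ} (A : Bool → Matrix (Fin (N + 1)) (Fin (N + 1)) ℝ)
    (hAgree : ∀ j : Fin (N + 1), j ≠ 0 → ∀ i, A true i j = A false i j)
    (S : SymbolSeq n) :
    ∀ k, ∀ j : Fin (N + 1), j ≠ 0 → ∀ i,
      (Pmat A S k * (1 - A true)) i j = (1 - Mmat A S k) i j := by
  intro k
  induction k with
  | zero => intro j hj i; simp [Pmat, Mmat]
  | succ k ih =>
    intro j hj i
    have hAs : A (S (k : ZMod n)) i j = A true i j := by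
      cases hs : S (k : ZMod n) with
      | true => rfl
      | false => exact (hAgree j hj i).symm
    have e1 : Pmat A S (k+1) * (1 - A true)
        = A (S (k : ZMod n)) * (Pmat A S k * (1 - A true)) + (1 - A true) := by
      show (A (S (k : ZMod n)) * Pmat A S k + 1) * (1 - A true) = _
      rw [add_mul, one_mul, mul_assoc]
    rw [e1]
    have e2 : (A (S (k : ZMod n)) * (Pmat A S k * (1 - A true))) i j
        = (A (S (k : ZMod n)) * (1 - Mmat A S k)) i j := by
      rw [Matrix.mul_apply, Matrix.mul_apply]
      exact Finset.sum_congr rfl fun l _ => by rw [ih j hj l]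
    rw [Matrix.add_apply, e2]
    have e3 : A (S (k : ZMod n)) * (1 - Mmat A S k)
        = A (S (k : ZMod n)) - A (S (k : ZMod n)) * Mmat A S k := by
      rw [mul_sub, mul_one]
    rw [e3]
    show (A (S (k : ZMod n)) - A (S (k : ZMod n)) * Mmat A S k) i j + (1 - A true) i j
        = (1 - A (S (k : ZMod n)) * Mmat A S k) i j
    rw [Matrix.sub_apply, Matrix.sub_apply, Matrix.sub_apply, hAs]
    ring

private lemma adjP_row {N n : ℕ} (A : Bool → Matrix (Fin (N + 1)) (Fin (N + 1)) ℝ)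
    (hAgree : ∀ j : Fin (N + 1), j ≠ 0 → ∀ i, A true i j = A false i j)
    (S : SymbolSeq n) (hP : (Pmat A S n).det ≠ 0) :
    ((1 - Mmat A S n).adjugate * Pmat A S n) 0
      = (Pmat A S n).det • (1 - A true).adjugate 0 := by
  set P := Pmat A S n with hPdef
  set M := Mmat A S n with hMdef
  have hPU : IsUnit P.det := isUnit_iff_ne_zero.mpr hP
  set B := P⁻¹ * (1 - M) with hB
  have hfac : 1 - M = P * B := by
    rw [hB, ← mul_assoc, Matrix.mul_nonsing_inv P hPU, one_mul]
  have hadj : (1 - M).adjugate * P = P.det • B.adjugate := by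
    rw [hfac, adjugate_mul_distrib, mul_assoc, adjugate_mul, Matrix.mul_smul, mul_one]
  have hBA : B.adjugate 0 = (1 - A true).adjugate 0 := by
    apply adj_row_zero_eq
    intro i j hj
    have : ∀ l, (1 - M) l j = (P * (1 - A true)) l j := fun l =>
      (key_cols A hAgree S n j hj l).symm
    calc B i j = ∑ l, P⁻¹ i l * (1 - M) l j := Matrix.mul_apply
      _ = ∑ l, P⁻¹ i l * (P * (1 - A true)) l j :=
          Finset.sum_congr rfl fun l _ => by rw [this l]
      _ = (P⁻¹ * (P * (1 - A true))) i j := (Matrix.mul_apply).symm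
      _ = (1 - A true) i j := by
          rw [← mul_assoc, Matrix.nonsing_inv_mul P hPU, one_mul]
  rw [hadj, ← hBA]
  rfl

/-- Lemma 5: if `P_S` is nonsingular, `μ ≠ 0` and `ϱᵀb ≠ 0` (where `ϱᵀ` is the
common first row of `adj(I-A_L)` and `adj(I-A_R)`), then the `n`-cycle solution
system `(I - M_S)x = μ P_S b` has a solution iff `I - M_S` is nonsingular. -/
theorem solution_exists_iff_nonsingular {N n : ℕ}
    (A : Bool → Matrix (Fin (N + 1)) (Fin (N + 1)) ℝ)
    (hAgree : ∀ j : Fin (N + 1), j ≠ 0 → ∀ i, A true i j = A false i j)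
    (S : SymbolSeq n) (b : Fin (N + 1) → ℝ) (μ : ℝ)
    (hP : (Pmat A S n).det ≠ 0) (hμ : μ ≠ 0)
    (hb : (1 - A true).adjugate 0 ⬝ᵥ b ≠ 0) :
    (∃ x : Fin (N + 1) → ℝ,
        (1 - Mmat A S n).mulVec x = μ • (Pmat A S n).mulVec b) ↔
      (1 - Mmat A S n).det ≠ 0 := by
  set P := Pmat A S n
  set M := Mmat A S n
  constructor
  · rintro ⟨x, hx⟩
    by_contra hdet
    set w := (1 - M).adjugate 0 with hw
    have hwM : w ᵥ* (1 - M) = 0 := by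
      have : ((1 - M).adjugate * (1 - M)) 0 = ((1 - M).det • (1 : Matrix (Fin (N+1)) (Fin (N+1)) ℝ)) 0 := by
        rw [adjugate_mul]
      funext j
      have h1 : (w ᵥ* (1 - M)) j = ((1 - M).adjugate * (1 - M)) 0 j := by
        simp [Matrix.vecMul, Matrix.mul_apply, dotProduct, hw]
      rw [h1, this, hdet]
      simp
    have h0 : w ⬝ᵥ ((1 - M).mulVec x) = 0 := by
      rw [dotProduct_mulVec, hwM, zero_dotProduct]
    rw [hx] at h0
    have hwP : w ᵥ* P = P.det • (1 - A true).adjugate 0 := by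
      have h2 : w ᵥ* P = ((1 - M).adjugate * P) 0 := by
        funext j
        simp [Matrix.vecMul, Matrix.mul_apply, dotProduct, hw]
      rw [h2, adjP_row A hAgree S hP]
    have h3 : w ⬝ᵥ (μ • P.mulVec b) = μ * (P.det * ((1 - A true).adjugate 0 ⬝ᵥ b)) := by
      rw [dotProduct_smul, dotProduct_mulVec, hwP]
      rw [smul_dotProduct]
      simp [smul_eq_mul]
    rw [h3] at h0
    exact (mul_ne_zero hμ (mul_ne_zero hP hb)) h0
  · intro hdet
    have hU : IsUnit (1 - M).det := isUnit_iff_ne_zero.mpr hdet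
    refine ⟨(1 - M)⁻¹.mulVec (μ • P.mulVec b), ?_⟩
    rw [mulVec_mulVec, Matrix.mul_nonsing_inv _ hU, one_mulVec]
end

section
/- If ϱᵀb ≠ 0 (with ϱᵀ the first row of adj(I - A_L)), I - A_L is singular, and v₀ is a nonzero vector in the null space of I - A_L, then the first component e₁ᵀv₀ is nonzero; moreover the null space of I - A_L is one-dimensional. -/
/-!
The entries of the `i`-th row of `adj A` are the determinants of the matrices obtained from `A`
by replacing one row with `eᵢᵀ`. A nonzero null vector `w` of `A` with `w i = 0` is a null
vector of all of them, so that row of `adj A` would vanish. Hence when it does not, no nonzero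
null vector has a vanishing `i`-th component, and the combination of two null vectors that
kills the `i`-th component shows that they are proportional.
-/

open Matrix

namespace Matrix

variable {n : Type*} [Fintype n] [DecidableEq n]

theorem adjugate_row_eq_zero_of_mulVec_eq_zero {R : Type*} [CommRing R] [IsDomain R]
    {A : Matrix n n R} {w : n → R} {i : n} (hw : w ≠ 0) (hAw : A *ᵥ w = 0) (hwi : w i = 0) :
    A.adjugate i = 0 := by
  funext j
  rw [adjugate_apply, Pi.zero_apply, ← exists_mulVec_eq_zero_iff]
  refine ⟨w, hw, funext fun k => ?_⟩
  by_cases hkj : k = j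
  · subst hkj
    simp [mulVec, single_dotProduct, hwi]
  · simpa [mulVec, updateRow_ne hkj] using congrFun hAw k

theorem eq_zero_of_mulVec_eq_zero_of_apply_eq_zero {R : Type*} [CommRing R] [IsDomain R]
    {A : Matrix n n R} {w : n → R} {i : n} (hadj : A.adjugate i ≠ 0) (hAw : A *ᵥ w = 0)
    (hwi : w i = 0) : w = 0 := by
  by_contra hw
  exact hadj (adjugate_row_eq_zero_of_mulVec_eq_zero hw hAw hwi)

theorem exists_eq_smul_of_mulVec_eq_zero {K : Type*} [Field K] {A : Matrix n n K}
    {v u : n → K} {i : n} (hadj : A.adjugate i ≠ 0) (hAv : A *ᵥ v = 0) (hvi : v i ≠ 0)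
    (hAu : A *ᵥ u = 0) : ∃ c : K, u = c • v := by
  refine ⟨u i / v i, sub_eq_zero.mp (eq_zero_of_mulVec_eq_zero_of_apply_eq_zero hadj ?_ ?_)⟩
  · rw [mulVec_sub, mulVec_smul, hAu, hAv, smul_zero, sub_zero]
  · simp [hvi]

end Matrix

theorem null_vector_first_component_ne_zero_general {N : ℕ}
    (AL : Matrix (Fin (N + 1)) (Fin (N + 1)) ℝ) (b : Fin (N + 1) → ℝ)
    (hb : (1 - AL).adjugate 0 ⬝ᵥ b ≠ 0)
    (v₀ : Fin (N + 1) → ℝ) (hv₀ : v₀ ≠ 0)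
    (hnull : (1 - AL).mulVec v₀ = 0) :
    v₀ 0 ≠ 0 ∧ ∀ u : Fin (N + 1) → ℝ, (1 - AL).mulVec u = 0 →
      ∃ c : ℝ, u = c • v₀ := by
  have hϱ : (1 - AL).adjugate 0 ≠ 0 := fun h => hb (by rw [h, zero_dotProduct])
  have hv₀0 : v₀ 0 ≠ 0 := fun h => hv₀ (eq_zero_of_mulVec_eq_zero_of_apply_eq_zero hϱ hnull h)
  exact ⟨hv₀0, fun u hu => exists_eq_smul_of_mulVec_eq_zero hϱ hnull hv₀0 hu⟩

/-- If `ϱᵀb ≠ 0` (with `ϱᵀ` the first row of `adj(I - A_L)`), `I - A_L` is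
singular, and `v₀` is a nonzero null vector of `I - A_L`, then the first
component of `v₀` is nonzero; moreover the null space of `I - A_L` is
one-dimensional (every null vector is a multiple of `v₀`). -/
theorem null_vector_first_component_ne_zero {N : ℕ}
    (AL : Matrix (Fin (N + 1)) (Fin (N + 1)) ℝ) (b : Fin (N + 1) → ℝ)
    (hb : (1 - AL).adjugate 0 ⬝ᵥ b ≠ 0)
    (hsing : (1 - AL).det = 0)
    (v₀ : Fin (N + 1) → ℝ) (hv₀ : v₀ ≠ 0)
    (hnull : (1 - AL).mulVec v₀ = 0) :
    v₀ 0 ≠ 0 ∧ ∀ u : Fin (N + 1) → ℝ, (1 - AL).mulVec u = 0 →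
      ∃ c : ℝ, u = c • v₀ :=
  null_vector_first_component_ne_zero_general AL b hb v₀ hv₀ hnull
end
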